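/- Suppose φ̄ : (Fin n → ℝ) → ℝ is continuously differentiable with φ̄(0) = 0 and satisfies the steady-state HJB equation with state cost m (continuous), i.e. for all x: ∇φ̄(x) ⬝ᵥ f(x) − (1/4)·((g x)ᵀ.mulVec (∇φ̄ x)) ⬝ᵥ (R⁻¹.mulVec ((g x)ᵀ.mulVec (∇φ̄ x))) + m(x) = 0. Let g be continuous and let x : ℝ → (Fin n → ℝ) be continuously differentiable and solve the optimal closed loop x'(t) = f(x(t)) − (1/2)·(g (x t)).mulVec (R⁻¹.mulVec ((g (x t))ᵀ.mulVec (∇φ̄ (x t)))) for all t, with the feedback control u(t) := −(1/2)·R⁻¹.mulVec ((g (x t))ᵀ.mulVec (∇φ̄ (x t))). If x(T) → 0 as T → ∞, then for every T ≥ 0, ∫₀ᵀ (‖u(t)‖²_R + m(x(t))) dt = φ̄(x(0)) − φ̄(x(T)), and consequently ∫₀ᵀ (‖u(t)‖²_R + m(x(t))) dt → φ̄(x(0)) as T → ∞. -/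

import Mathlib

open Matrix Filter

/-!
Along the optimal closed loop, the HJB equation makes `t ↦ φ̄ (x t)` decrease at exactly the
running cost `‖u t‖²_R + m (x t)`: with `w = (g x)ᵀ ∇φ̄`, the drift contributes
`∇φ̄ ⬝ f − ½ w ⬝ R⁻¹ w = ¼ w ⬝ R⁻¹ w − m − ½ w ⬝ R⁻¹ w` and `‖u‖²_R = ¼ w ⬝ R⁻¹ w`.
The fundamental theorem of calculus turns this into the finite-horizon identity, and
`φ̄ (x T) → φ̄ 0 = 0` gives the limit.
-/

/-- Euclidean gradient of a scalar function on `Fin n → ℝ`: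
the vector of partial derivatives. -/
noncomputable def grad {n : ℕ} (φ : (Fin n → ℝ) → ℝ) (x : Fin n → ℝ) : Fin n → ℝ :=
  fun i => fderiv ℝ φ x (Pi.single i 1)

/-- `R`-weighted squared norm `‖u‖²_R = u ⬝ᵥ R.mulVec u`. -/
def sqR {p : ℕ} (R : Matrix (Fin p) (Fin p) ℝ) (u : Fin p → ℝ) : ℝ :=
  u ⬝ᵥ R.mulVec u

lemma fderiv_apply_eq_grad_dotProduct {n : ℕ} (φ : (Fin n → ℝ) → ℝ) (y v : Fin n → ℝ) :
    fderiv ℝ φ y v = grad φ y ⬝ᵥ v := by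
  conv_lhs => rw [pi_eq_sum_univ' v]
  simp only [map_sum, map_smul, grad, dotProduct, smul_eq_mul, mul_comm]

lemma ContDiff.continuous_grad {n : ℕ} {φ : (Fin n → ℝ) → ℝ} (hφ : ContDiff ℝ 1 φ) :
    Continuous (grad φ) :=
  continuous_pi fun _ => (hφ.continuous_fderiv one_ne_zero).clm_apply continuous_const

lemma sqR_smul_inv_mulVec {p : ℕ} {R : Matrix (Fin p) (Fin p) ℝ} (hR : IsUnit R.det)
    (c : ℝ) (w : Fin p → ℝ) :
    sqR R (c • R⁻¹ *ᵥ w) = c ^ 2 * (w ⬝ᵥ R⁻¹ *ᵥ w) := by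
  rw [sqR, mulVec_smul, mulVec_mulVec, mul_nonsing_inv R hR, one_mulVec, smul_dotProduct,
    dotProduct_smul, dotProduct_comm, smul_eq_mul, smul_eq_mul]
  ring

lemma dotProduct_closedLoop_eq_neg_cost {n p : ℕ} {R : Matrix (Fin p) (Fin p) ℝ}
    (hR : IsUnit R.det) (G : Matrix (Fin n) (Fin p) ℝ) (q a : Fin n → ℝ) (c : ℝ)
    (hHJB : q ⬝ᵥ a - (1/4) * (Gᵀ *ᵥ q ⬝ᵥ R⁻¹ *ᵥ (Gᵀ *ᵥ q)) + c = 0) :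
    q ⬝ᵥ (a - (1/2 : ℝ) • G *ᵥ (R⁻¹ *ᵥ (Gᵀ *ᵥ q))) =
      -(sqR R (-(1/2 : ℝ) • R⁻¹ *ᵥ (Gᵀ *ᵥ q)) + c) := by
  rw [sqR_smul_inv_mulVec hR, dotProduct_sub, dotProduct_smul, dotProduct_mulVec,
    ← mulVec_transpose, smul_eq_mul]
  linarith

lemma integral_eq_sub_of_hasDerivAt_neg {V ℓ : ℝ → ℝ} (hV : ∀ t, HasDerivAt V (-ℓ t) t)
    (hℓ : Continuous ℓ) (T : ℝ) :
    ∫ t in (0:ℝ)..T, ℓ t = V 0 - V T := by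
  have := intervalIntegral.integral_eq_sub_of_hasDerivAt (fun t _ => hV t)
    (hℓ.neg.intervalIntegrable 0 T)
  rw [intervalIntegral.integral_neg] at this
  linarith

theorem stmt_7_general {n p : ℕ}
    (f : (Fin n → ℝ) → (Fin n → ℝ))
    (g : (Fin n → ℝ) → Matrix (Fin n) (Fin p) ℝ)
    (hg : Continuous g)
    (R : Matrix (Fin p) (Fin p) ℝ)
    (hRpd : R.PosDef)
    (m : (Fin n → ℝ) → ℝ) (hm : Continuous m)
    (φb : (Fin n → ℝ) → ℝ)
    (hφ : ContDiff ℝ 1 φb) (hφ0 : φb 0 = 0)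
    (hHJB : ∀ x, grad φb x ⬝ᵥ f x
        - (1/4) * ((g x)ᵀ.mulVec (grad φb x) ⬝ᵥ R⁻¹.mulVec ((g x)ᵀ.mulVec (grad φb x)))
        + m x = 0)
    (x : ℝ → (Fin n → ℝ))
    (hx : ∀ t, HasDerivAt x
      (f (x t) - (1/2 : ℝ) • (g (x t)).mulVec (R⁻¹.mulVec ((g (x t))ᵀ.mulVec (grad φb (x t))))) t)
    (u : ℝ → (Fin p → ℝ))
    (hu : ∀ t, u t = -(1/2 : ℝ) • R⁻¹.mulVec ((g (x t))ᵀ.mulVec (grad φb (x t))))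
    (hx0 : Tendsto x atTop (nhds 0)) :
    (∀ T : ℝ, 0 ≤ T →
        (∫ t in (0:ℝ)..T, (sqR R (u t) + m (x t))) = φb (x 0) - φb (x T))
    ∧ Tendsto (fun T : ℝ => ∫ t in (0:ℝ)..T, (sqR R (u t) + m (x t)))
        atTop (nhds (φb (x 0))) := by
  have hR : IsUnit R.det := isUnit_iff_ne_zero.mpr hRpd.det_pos.ne'
  have hxc : Continuous x := continuous_iff_continuousAt.mpr fun t => (hx t).continuousAt
  have hcost : Continuous fun t => sqR R (u t) + m (x t) := by
    have huc : Continuous u := by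
      rw [funext hu]
      have := hφ.continuous_grad
      fun_prop
    exact (huc.dotProduct (continuous_const.matrix_mulVec huc)).add (hm.comp hxc)
  have hdecay : ∀ t, HasDerivAt (fun s => φb (x s)) (-(sqR R (u t) + m (x t))) t := fun t => by
    have := ((hφ.differentiable one_ne_zero (x t)).hasFDerivAt.comp_hasDerivAt t (hx t))
    rwa [fderiv_apply_eq_grad_dotProduct, dotProduct_closedLoop_eq_neg_cost hR _ _ _ _
      (hHJB (x t)), ← hu] at this
  have hidentity := integral_eq_sub_of_hasDerivAt_neg hdecay hcost
  refine ⟨fun T _ => hidentity T, ?_⟩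
  have hlim : Tendsto (fun T => φb (x T)) atTop (nhds 0) :=
    hφ0 ▸ (hφ.continuous.tendsto 0).comp hx0
  simpa [hidentity] using (tendsto_const_nhds (x := φb (x 0))).sub hlim

theorem stmt_7 {n p : ℕ}
    (f : (Fin n → ℝ) → (Fin n → ℝ))
    (g : (Fin n → ℝ) → Matrix (Fin n) (Fin p) ℝ)
    (hg : Continuous g)
    (R : Matrix (Fin p) (Fin p) ℝ)
    (hRsymm : R.IsSymm) (hRpd : R.PosDef)
    (m : (Fin n → ℝ) → ℝ) (hm : Continuous m)
    (φb : (Fin n → ℝ) → ℝ)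
    (hφ : ContDiff ℝ 1 φb) (hφ0 : φb 0 = 0)
    (hHJB : ∀ x, grad φb x ⬝ᵥ f x
        - (1/4) * ((g x)ᵀ.mulVec (grad φb x) ⬝ᵥ R⁻¹.mulVec ((g x)ᵀ.mulVec (grad φb x)))
        + m x = 0)
    (x : ℝ → (Fin n → ℝ)) (hxC1 : ContDiff ℝ 1 x)
    (hx : ∀ t, HasDerivAt x
      (f (x t) - (1/2 : ℝ) • (g (x t)).mulVec (R⁻¹.mulVec ((g (x t))ᵀ.mulVec (grad φb (x t))))) t)
    (u : ℝ → (Fin p → ℝ))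
    (hu : ∀ t, u t = -(1/2 : ℝ) • R⁻¹.mulVec ((g (x t))ᵀ.mulVec (grad φb (x t))))
    (hx0 : Tendsto x atTop (nhds 0)) :
    (∀ T : ℝ, 0 ≤ T →
        (∫ t in (0:ℝ)..T, (sqR R (u t) + m (x t))) = φb (x 0) - φb (x T))
    ∧ Tendsto (fun T : ℝ => ∫ t in (0:ℝ)..T, (sqR R (u t) + m (x t)))
        atTop (nhds (φb (x 0))) :=
  stmt_7_general f g hg R hRpd m hm φb hφ hφ0 hHJB x hx u hu hx0
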